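/- The Hamiltonian vector field of H = (1/2)⟨M, A_d M⟩ with respect to the deformed bracket {·,·}_d, multiplied by the Jacobi multiplier μ_d = √g(γ), reproduces the Chaplygin equations of motion: μ_d·{H, γ}_d = γ × A_d M and μ_d·{H, M}_d = M × A_d M, and these identities hold identically, without restriction to the level set ⟨γ, M⟩ = 0. -/

import Mathlib

open Matrix Filter

noncomputable section
set_option maxHeartbeats 4000000

/-- Index type for the phase space ℝ³×ℝ³: `Sum.inl` indexes γ, `Sum.inr` indexes M. -/
abbrev Idx : Type := Fin 3 ⊕ Fin 3

/-- The phase space ℝ⁶ of the variables (γ, M). -/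
abbrev V : Type := Idx → ℝ

/-- The totally antisymmetric Levi-Civita symbol on `Fin 3` with ε₀₁₂ = 1. -/
def eps (i j k : Fin 3) : ℝ :=
  (((i : ℕ) : ℝ) - ((j : ℕ) : ℝ)) * (((j : ℕ) : ℝ) - ((k : ℕ) : ℝ)) *
    (((k : ℕ) : ℝ) - ((i : ℕ) : ℝ)) / 2

def gI (i : Fin 3) : Idx := Sum.inl i
def mI (i : Fin 3) : Idx := Sum.inr i

/-- The γ-part of a phase point. -/
def gPart (x : V) : Fin 3 → ℝ := fun i => x (gI i)

/-- The M-part of a phase point. -/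
def mPart (x : V) : Fin 3 → ℝ := fun i => x (mI i)

/-- Partial derivative of `f` at `x` in the coordinate direction `a`. -/
def pd (f : V → ℝ) (x : V) (a : Idx) : ℝ := fderiv ℝ f x (Pi.single a 1)

/-- Bracket with structure functions `{M_i,M_j} = Σ_k ε_{ijk}·cM x k`,
`{M_i,γ_j} = Σ_k ε_{ijk}·cG x k`, `{γ_i,γ_j} = 0`, extended to functions
via partial derivatives. -/
def bracket (cM cG : V → Fin 3 → ℝ) (f g : V → ℝ) (x : V) : ℝ :=
  ∑ i : Fin 3, ∑ j : Fin 3, ∑ k : Fin 3, eps i j k *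
    (cM x k * pd f x (mI i) * pd g x (mI j)
      + cG x k * (pd f x (mI i) * pd g x (gI j) + pd f x (gI i) * pd g x (mI j)))

/-- Structure functions of the standard Lie–Poisson bracket on e*(3). -/
def cMstd (x : V) : Fin 3 → ℝ := mPart x

def cGstd (x : V) : Fin 3 → ℝ := gPart x

/-- A = diag(a₁,a₂,a₃). -/
def Amat (a₁ a₂ a₃ : ℝ) : Matrix (Fin 3) (Fin 3) ℝ := Matrix.diagonal ![a₁, a₂, a₃]

/-- g(γ) = (1 − d⟨γ, Aγ⟩)⁻¹. -/
def gfun (a₁ a₂ a₃ d : ℝ) (x : V) : ℝ :=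
  (1 - d * (gPart x ⬝ᵥ (Amat a₁ a₂ a₃).mulVec (gPart x)))⁻¹

/-- √g(γ). -/
def sg (a₁ a₂ a₃ d : ℝ) (x : V) : ℝ := Real.sqrt (gfun a₁ a₂ a₃ d x)

/-- ⟨M, Aγ⟩. -/
def MAg (a₁ a₂ a₃ : ℝ) (x : V) : ℝ := mPart x ⬝ᵥ (Amat a₁ a₂ a₃).mulVec (gPart x)

/-- Structure functions `cM` of the deformed (Chaplygin) bracket:
`{M_i,M_j}_d = Σ_k ε_{ijk}(M_k/√g − d√g⟨M,Aγ⟩γ_k)`. -/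
def cMd (a₁ a₂ a₃ d : ℝ) (x : V) : Fin 3 → ℝ := fun k =>
  mPart x k / sg a₁ a₂ a₃ d x - d * sg a₁ a₂ a₃ d x * MAg a₁ a₂ a₃ x * gPart x k

/-- Structure functions `cG` of the deformed bracket: `{M_i,γ_j}_d = Σ_k ε_{ijk} γ_k/√g`. -/
def cGd (a₁ a₂ a₃ d : ℝ) (x : V) : Fin 3 → ℝ := fun k =>
  gPart x k / sg a₁ a₂ a₃ d x

/-- A_d = A + d·g(γ)·(Aγ)⊗(Aγ). -/
def Adm (a₁ a₂ a₃ d : ℝ) (x : V) : Matrix (Fin 3) (Fin 3) ℝ :=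
  Amat a₁ a₂ a₃ + (d * gfun a₁ a₂ a₃ d x) •
    vecMulVec ((Amat a₁ a₂ a₃).mulVec (gPart x)) ((Amat a₁ a₂ a₃).mulVec (gPart x))

def prj (c : Idx) : V →L[ℝ] ℝ := ContinuousLinearMap.proj (R := ℝ) (φ := fun _ : Idx => ℝ) c

lemma hprj (c : Idx) (x : V) : HasFDerivAt (fun y : V => y c) (prj c) x :=
  (prj c).hasFDerivAt

lemma prj_single (c b : Idx) : prj c (Pi.single b 1) = if b = c then 1 else 0 := by
  simp [prj, ContinuousLinearMap.proj_apply, Pi.single_apply, eq_comm]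

lemma pd_coord (c b : Idx) (x : V) : pd (fun y => y c) x b = if b = c then 1 else 0 := by
  rw [pd, (hprj c x).fderiv, prj_single]

def Hx (a₁ a₂ a₃ d : ℝ) : V → ℝ := fun y : V =>
  (1/2) * ((a₁ * (y (mI 0) * y (mI 0)) + a₂ * (y (mI 1) * y (mI 1)) + a₃ * (y (mI 2) * y (mI 2)))
        + d * (1 - d * (a₁ * (y (gI 0) * y (gI 0)) + a₂ * (y (gI 1) * y (gI 1)) + a₃ * (y (gI 2) * y (gI 2))))⁻¹
          * ((a₁ * (y (mI 0) * y (gI 0)) + a₂ * (y (mI 1) * y (gI 1)) + a₃ * (y (mI 2) * y (gI 2))) *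
             (a₁ * (y (mI 0) * y (gI 0)) + a₂ * (y (mI 1) * y (gI 1)) + a₃ * (y (mI 2) * y (gI 2)))))

lemma pdH (a₁ a₂ a₃ d e : ℝ) (x : V)
    (hx : 1 - d * (a₁ * (x (gI 0) * x (gI 0)) + a₂ * (x (gI 1) * x (gI 1)) + a₃ * (x (gI 2) * x (gI 2))) ≠ 0)
    (he : e = (1 - d * (a₁ * (x (gI 0) * x (gI 0)) + a₂ * (x (gI 1) * x (gI 1)) + a₃ * (x (gI 2) * x (gI 2))))⁻¹)
    (b : Idx) :
    pd (Hx a₁ a₂ a₃ d) x b =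
      (let P := a₁ * x (mI 0) * x (gI 0) + a₂ * x (mI 1) * x (gI 1) + a₃ * x (mI 2) * x (gI 2)
       let a : Fin 3 → ℝ := ![a₁, a₂, a₃]
       match b with
       | Sum.inr i => a i * x (mI i) + d * e * P * a i * x (gI i)
       | Sum.inl i => d * e * P * a i * x (mI i) + d^2 * e^2 * P^2 * a i * x (gI i)) := by
  have hR := ((((hprj (mI 0) x).mul (hprj (mI 0) x)).const_mul a₁).add (((hprj (mI 1) x).mul (hprj (mI 1) x)).const_mul a₂)).add
      (((hprj (mI 2) x).mul (hprj (mI 2) x)).const_mul a₃)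
  have hQ := ((((hprj (gI 0) x).mul (hprj (gI 0) x)).const_mul a₁).add (((hprj (gI 1) x).mul (hprj (gI 1) x)).const_mul a₂)).add
      (((hprj (gI 2) x).mul (hprj (gI 2) x)).const_mul a₃)
  have hU := (hQ.const_mul d).const_sub 1
  have hUinv := (hasFDerivAt_inv' (𝕜 := ℝ) hx).comp x hU
  simp only [Function.comp_def] at hUinv
  have hP := ((((hprj (mI 0) x).mul (hprj (gI 0) x)).const_mul a₁).add
      (((hprj (mI 1) x).mul (hprj (gI 1) x)).const_mul a₂)).add
      (((hprj (mI 2) x).mul (hprj (gI 2) x)).const_mul a₃)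
  have hH := (hR.add ((hUinv.const_mul d).mul (hP.mul hP))).const_mul (1/2)
  have hH' : HasFDerivAt (Hx a₁ a₂ a₃ d) _ x := hH
  rw [pd, hH'.fderiv, ← he]
  rcases b with i | i <;> fin_cases i <;>
    · subst he
      simp only [ContinuousLinearMap.smul_apply, ContinuousLinearMap.add_apply,
        ContinuousLinearMap.coe_comp', Function.comp_apply, ContinuousLinearMap.neg_apply,
        ContinuousLinearMap.coe_smul', Pi.smul_apply, ContinuousLinearMap.mulLeftRight_apply,
        prj_single, gI, mI, Sum.inl.injEq, Sum.inr.injEq, reduceCtorEq]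
      simp [Fin.ext_iff]
      field_simp
      ring


/-- The Hamiltonian vector field of H = ½⟨M, A_d M⟩ for the deformed
bracket, multiplied by the Jacobi multiplier μ_d = √g, reproduces the Chaplygin
equations of motion. -/
theorem deformed_hamiltonian_flow (a₁ a₂ a₃ d : ℝ) (x : V)
    (hx : 0 < 1 - d * (gPart x ⬝ᵥ (Amat a₁ a₂ a₃).mulVec (gPart x))) (i : Fin 3) :
    sg a₁ a₂ a₃ d x * bracket (cMd a₁ a₂ a₃ d) (cGd a₁ a₂ a₃ d)
        (fun y => (1 / 2) * (mPart y ⬝ᵥ (Adm a₁ a₂ a₃ d y).mulVec (mPart y)))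
        (fun y => y (gI i)) x
      = crossProduct (gPart x) ((Adm a₁ a₂ a₃ d x).mulVec (mPart x)) i ∧
    sg a₁ a₂ a₃ d x * bracket (cMd a₁ a₂ a₃ d) (cGd a₁ a₂ a₃ d)
        (fun y => (1 / 2) * (mPart y ⬝ᵥ (Adm a₁ a₂ a₃ d y).mulVec (mPart y)))
        (fun y => y (mI i)) x
      = crossProduct (mPart x) ((Adm a₁ a₂ a₃ d x).mulVec (mPart x)) i := by
  have hq : gPart x ⬝ᵥ (Amat a₁ a₂ a₃).mulVec (gPart x)
      = a₁ * (x (gI 0) * x (gI 0)) + a₂ * (x (gI 1) * x (gI 1)) + a₃ * (x (gI 2) * x (gI 2)) := by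
    simp [gPart, Amat, dotProduct, mulVec, Fin.sum_univ_three, Matrix.diagonal_apply]
    ring
  have hU0 : (0:ℝ) < 1 - d * (a₁ * (x (gI 0) * x (gI 0)) + a₂ * (x (gI 1) * x (gI 1))
      + a₃ * (x (gI 2) * x (gI 2))) := by rw [← hq]; exact hx
  have hUne : (1 - d * (a₁ * (x (gI 0) * x (gI 0)) + a₂ * (x (gI 1) * x (gI 1))
      + a₃ * (x (gI 2) * x (gI 2)))) ≠ 0 := ne_of_gt hU0
  have hgpos : 0 < gfun a₁ a₂ a₃ d x := by
    rw [gfun]; exact inv_pos.mpr hx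
  have hspos : 0 < sg a₁ a₂ a₃ d x := Real.sqrt_pos.mpr hgpos
  have hsne : sg a₁ a₂ a₃ d x ≠ 0 := ne_of_gt hspos
  have hs2 : (sg a₁ a₂ a₃ d x)^2 = gfun a₁ a₂ a₃ d x := Real.sq_sqrt hgpos.le
  have he : (sg a₁ a₂ a₃ d x)^2 = (1 - d * (a₁ * (x (gI 0) * x (gI 0))
      + a₂ * (x (gI 1) * x (gI 1)) + a₃ * (x (gI 2) * x (gI 2))))⁻¹ := by
    rw [hs2, gfun, hq]
  have hg2 : gfun a₁ a₂ a₃ d x = (sg a₁ a₂ a₃ d x)^2 := hs2.symm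
  have hfun : (fun y : V => (1 / 2) * (mPart y ⬝ᵥ (Adm a₁ a₂ a₃ d y).mulVec (mPart y)))
      = Hx a₁ a₂ a₃ d := by
    funext y
    simp [Adm, Amat, gfun, Hx, mPart, gPart, dotProduct, mulVec, vecMulVec_apply,
      Matrix.diagonal_apply, Fin.sum_univ_three, Matrix.add_apply, Matrix.smul_apply]
    ring
  rw [hfun]
  have hPd := pdH a₁ a₂ a₃ d ((sg a₁ a₂ a₃ d x)^2) x hUne he
  have hMA : MAg a₁ a₂ a₃ x = a₁ * (x (mI 0) * x (gI 0)) + a₂ * (x (mI 1) * x (gI 1))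
      + a₃ * (x (mI 2) * x (gI 2)) := by
    simp [MAg, Amat, mPart, gPart, dotProduct, mulVec, Fin.sum_univ_three, Matrix.diagonal_apply]
    ring
  constructor <;>
  · fin_cases i <;>
    · rw [bracket]
      simp only [Fin.sum_univ_three, hPd, pd_coord, cMd, cGd, hMA, mPart, gPart]
      simp only [gI, mI, Sum.inl.injEq, Sum.inr.injEq, reduceCtorEq, cross_apply, Adm, Amat,
        mulVec, dotProduct, vecMulVec_apply, Matrix.add_apply, Matrix.smul_apply,
        Matrix.diagonal_apply, Fin.sum_univ_three, hg2, mPart, gPart]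
      simp [eps, Fin.ext_iff]
      field_simp
      ring
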